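/- arXiv:1607.02910 — 4 statements merged into one kernel-verified Lean document; each statement's English description precedes it below -/
import Mathlib

section
/- Let K be a number field, L ⊆ K a full lattice with multiplier ring O = O_L, and suppose L is O-invertible, i.e. L·L⁻¹ = O where L⁻¹ = {λ ∈ K : λL ⊆ O}. Then the trace dual of L satisfies L* = L⁻¹ · O*. -/
open scoped Pointwise

/-- The trace dual of a subset `S` of a number field `K`. -/
def dualSet (K : Type*) [Field K] [NumberField K] (S : Set K) : Set K :=
  {x : K | ∀ l ∈ S, ∃ n : ℤ, Algebra.trace ℚ K (x * l) = (n : ℚ)}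

/-- `L` is a full lattice in the number field `K`. -/
def IsFullLattice (K : Type*) [Field K] [NumberField K] (L : Submodule ℤ K) : Prop :=
  L.FG ∧ Submodule.span ℚ (L : Set K) = ⊤

/-- The multiplier ring `O_S = {λ ∈ K : λ·S ⊆ S}` of a subset `S ⊆ K`. -/
def multiplierSet (K : Type*) [Field K] (S : Set K) : Set K :=
  {c : K | ∀ x ∈ S, c * x ∈ S}

/-- The multiplicative inverse `S⁻¹ = {λ ∈ K : λ·S ⊆ O_S}` of a subset `S ⊆ K`. -/
def invSet (K : Type*) [Field K] (S : Set K) : Set K :=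
  {c : K | ∀ x ∈ S, c * x ∈ multiplierSet K S}

/-- The trace dual as a ℤ-submodule. -/
def dualSubmodule (K : Type*) [Field K] [NumberField K] (S : Set K) : Submodule ℤ K where
  carrier := dualSet K S
  zero_mem' := fun l _ => ⟨0, by simp⟩
  add_mem' := by
    intro a b ha hb l hl
    obtain ⟨m, hm⟩ := ha l hl
    obtain ⟨n, hn⟩ := hb l hl
    exact ⟨m + n, by rw [add_mul, map_add, hm, hn]; push_cast; ring⟩
  smul_mem' := by
    intro z a ha l hl
    obtain ⟨n, hn⟩ := ha l hl
    refine ⟨z * n, ?_⟩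
    rw [smul_mul_assoc, map_zsmul, hn, zsmul_eq_mul]
    push_cast; ring

/-- If a full lattice `L` is `O_L`-invertible, i.e. `L·L⁻¹ = O_L`, then its trace dual
satisfies `L* = L⁻¹ · (O_L)*` (products of lattices being `ℤ`-spans of pairwise
products). -/
theorem dualSet_eq_invSet_mul_dual_multiplier (K : Type*) [Field K] [NumberField K]
    (L : Submodule ℤ K) (hL : IsFullLattice K L)
    (hinv : (Submodule.span ℤ ((L : Set K) * invSet K (L : Set K)) : Set K)
      = multiplierSet K (L : Set K)) :
    dualSet K (L : Set K)
      = (Submodule.span ℤ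
          (invSet K (L : Set K) * dualSet K (multiplierSet K (L : Set K))) : Set K) := by
  apply Set.Subset.antisymm
  · -- L* ⊆ span (L⁻¹ * O*)
    intro x hx
    -- 1 ∈ O = span (L * L⁻¹)
    have h1 : (1 : K) ∈ Submodule.span ℤ ((L : Set K) * invSet K (L : Set K)) := by
      rw [← SetLike.mem_coe, hinv]
      intro y hy
      simpa using hy
    -- x = x * 1 ∈ map (mulLeft x) span
    have hmap : x ∈ Submodule.map (LinearMap.mulLeft ℤ x)
        (Submodule.span ℤ ((L : Set K) * invSet K (L : Set K))) :=
      ⟨1, h1, mul_one x⟩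
    rw [Submodule.map_span] at hmap
    refine Submodule.span_mono ?_ hmap
    rintro _ ⟨_, ⟨l, hl, i, hi, rfl⟩, rfl⟩
    refine ⟨i, hi, x * l, ?_, by simp [LinearMap.mulLeft_apply]; ring⟩
    -- x * l ∈ O*
    intro o ho
    obtain ⟨n, hn⟩ := hx (o * l) (ho l hl)
    exact ⟨n, by rw [← hn]; ring_nf⟩
  · -- span (L⁻¹ * O*) ⊆ L*
    have : Submodule.span ℤ
        (invSet K (L : Set K) * dualSet K (multiplierSet K (L : Set K)))
        ≤ dualSubmodule K (L : Set K) := by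
      rw [Submodule.span_le]
      rintro _ ⟨i, hi, o, ho, rfl⟩
      intro l hl
      obtain ⟨n, hn⟩ := ho (i * l) (hi l hl)
      exact ⟨n, by rw [← hn]; ring_nf⟩
    exact this
end

section
/- Let K be a number field and let m, n ⊆ K be two full lattices. Then there exists a positive integer N such that the principal congruence subgroup Γ_{O_K}(N·O_K) = {γ ∈ GL₂(O_K) : γ ≡ I₂ mod N·O_K} is contained in GL(m⊕n) = {γ ∈ GL₂(K) : (m,n)·γ = (m,n)}, where GL₂(K) acts on row vectors (x,y) ∈ K² by right matrix multiplication. -/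
namespace Submodule

variable {V : Type*} [AddCommGroup V] [Module ℚ V] {M : Submodule ℤ V}

theorem exists_pos_nsmul_mem_of_span_rat_eq_top (hM : span ℚ (M : Set V) = ⊤) (z : V) :
    ∃ N : ℕ, 0 < N ∧ N • z ∈ M := by
  -- `V` is its own localization at `ℤ⁰`, so `span ℚ M` consists of the fractions `x / s`, `x ∈ M`
  have := isLocalizedModule_id (nonZeroDivisors ℤ) V ℚ
  have hz : z ∈ M.localized' ℚ (nonZeroDivisors ℤ) LinearMap.id := by
    simp [localized'_eq_span, hM]
  obtain ⟨x, hx, ⟨s, hs⟩, hxz⟩ := hz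
  rw [IsLocalizedModule.mk'_eq_iff, LinearMap.id_apply] at hxz
  refine ⟨s.natAbs, Int.natAbs_pos.2 (nonZeroDivisors.ne_zero hs), ?_⟩
  have habs : |s| • z ∈ M := by
    rcases abs_choice s with h | h
    · rw [h]; simpa [hxz] using hx
    · rw [h, neg_smul]; simpa [hxz] using hx
  rwa [← Int.natCast_natAbs, natCast_zsmul] at habs

theorem FG.exists_pos_nsmul_mem {L : Submodule ℤ V} (hL : L.FG)
    (hM : span ℚ (M : Set V) = ⊤) : ∃ N : ℕ, 0 < N ∧ ∀ z ∈ L, N • z ∈ M := by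
  induction L, hL using fg_induction with
  | singleton x =>
    obtain ⟨N, hN0, hN⟩ := exists_pos_nsmul_mem_of_span_rat_eq_top hM x
    refine ⟨N, hN0, fun z hz => ?_⟩
    obtain ⟨k, rfl⟩ := mem_span_singleton.1 hz
    rw [smul_comm]
    exact M.smul_mem k hN
  | sup L₁ L₂ _ _ ih₁ ih₂ =>
    obtain ⟨N₁, hN₁0, hN₁⟩ := ih₁
    obtain ⟨N₂, hN₂0, hN₂⟩ := ih₂
    refine ⟨N₁ * N₂, Nat.mul_pos hN₁0 hN₂0, fun z hz => ?_⟩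
    obtain ⟨y₁, hy₁, y₂, hy₂, rfl⟩ := mem_sup.1 hz
    rw [smul_add, mul_nsmul, mul_nsmul']
    exact add_mem (M.nsmul_mem (hN₁ y₁ hy₁) _) (M.nsmul_mem (hN₂ y₂ hy₂) _)

theorem FG.exists_pos_nsmul_mem_forall {ι : Type*} [Fintype ι] {M : ι → Submodule ℤ V}
    {L : Submodule ℤ V} (hL : L.FG) (hM : ∀ i, span ℚ (M i : Set V) = ⊤) :
    ∃ N : ℕ, 0 < N ∧ ∀ i, ∀ z ∈ L, N • z ∈ M i := by
  choose N hN0 hN using fun i => hL.exists_pos_nsmul_mem (hM i)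
  refine ⟨∏ i, N i, Finset.prod_pos fun i _ => hN0 i, fun i z hz => ?_⟩
  obtain ⟨k, hk⟩ := Finset.dvd_prod_of_mem N (Finset.mem_univ i)
  rw [hk, mul_comm, mul_nsmul']
  exact (M i).nsmul_mem (hN i z hz) _

end Submodule

namespace Matrix

variable {ι K : Type*} [DecidableEq ι] [CommRing K]

def ModEqOne (O : Subring K) (N : K) (γ : Matrix ι ι K) : Prop :=
  ∀ i j, ∃ c ∈ O, γ i j - (1 : Matrix ι ι K) i j = N * c

variable [Fintype ι] {O : Subring K} {γ : Matrix ι ι K}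

theorem adjugate_apply_mem_of_forall_mem (hγ : ∀ i j, γ i j ∈ O) (i j : ι) :
    γ.adjugate i j ∈ O := by
  have : γ = O.subtype.mapMatrix (of fun i j => ⟨γ i j, hγ i j⟩) := rfl
  rw [this, ← RingHom.map_adjugate]
  exact Subtype.property _

theorem nonsing_inv_eq_smul_adjugate {δ : K} (hδ : γ.det * δ = 1) : γ⁻¹ = δ • γ.adjugate :=
  inv_eq_left_inv <| by rw [smul_mul, adjugate_mul, smul_smul, mul_comm, hδ, one_smul]

theorem nonsing_inv_apply_mem_of_forall_mem (hγ : ∀ i j, γ i j ∈ O) {δ : K} (hδO : δ ∈ O)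
    (hδ : γ.det * δ = 1) (i j : ι) : γ⁻¹ i j ∈ O := by
  rw [nonsing_inv_eq_smul_adjugate hδ, smul_apply, smul_eq_mul]
  exact mul_mem hδO (adjugate_apply_mem_of_forall_mem hγ i j)

theorem ModEqOne.nonsing_inv {N : K} (h : ModEqOne O N γ) (hinv : ∀ i j, γ⁻¹ i j ∈ O)
    (hu : IsUnit γ.det) : ModEqOne O N γ⁻¹ := by
  intro i j
  choose c hcO hc using h
  refine ⟨-∑ k, γ⁻¹ i k * c k j, neg_mem (sum_mem fun k _ => mul_mem (hinv i k) (hcO k j)), ?_⟩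
  have hsub : γ⁻¹ - 1 = -(γ⁻¹ * (γ - 1)) := by
    rw [Matrix.mul_sub, nonsing_inv_mul _ hu, mul_one, neg_sub]
  rw [← sub_apply, hsub, neg_apply, mul_apply]
  simp only [sub_apply, hc, Finset.mul_sum, mul_neg, mul_left_comm]

theorem ModEqOne.mapsTo_vecMul_pi {L : ι → Submodule ℤ K} {N : K} (h : ModEqOne O N γ)
    (hL : ∀ i j, ∀ x ∈ L i, ∀ c ∈ O, N * (x * c) ∈ L j) :
    Set.MapsTo (· ᵥ* γ) (Set.univ.pi fun i => L i) (Set.univ.pi fun i => L i) := by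
  intro v hv j _
  choose c hcO hc using h
  have hv' : ∀ i, v i ∈ L i := fun i => hv i trivial
  have hvγ : (v ᵥ* γ) j = v j + ∑ i, N * (v i * c i j) := by
    calc (v ᵥ* γ) j = v j + (v ᵥ* (γ - 1)) j := by
          rw [vecMul_sub, vecMul_one, Pi.sub_apply, add_sub_cancel]
      _ = v j + ∑ i, N * (v i * c i j) := by
          simp only [vecMul, dotProduct, sub_apply, hc]
          exact congrArg _ (Finset.sum_congr rfl fun i _ => by ring)
  change (v ᵥ* γ) j ∈ L j
  rw [hvγ]
  exact add_mem (hv' j) (sum_mem fun i _ => hL i j _ (hv' i) _ (hcO i j))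

theorem ModEqOne.image_vecMul_pi_eq {L : ι → Submodule ℤ K} {N : K} (h : ModEqOne O N γ)
    (hL : ∀ i j, ∀ x ∈ L i, ∀ c ∈ O, N * (x * c) ∈ L j) (hγ : ∀ i j, γ i j ∈ O)
    (hdet : ∃ δ ∈ O, γ.det * δ = 1) :
    (· ᵥ* γ) '' (Set.univ.pi fun i => L i) = Set.univ.pi fun i => L i := by
  obtain ⟨δ, hδO, hδ⟩ := hdet
  have hu : IsUnit γ.det := IsUnit.of_mul_eq_one _ hδ
  have hinv := nonsing_inv_apply_mem_of_forall_mem hγ hδO hδ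
  refine (h.mapsTo_vecMul_pi hL).image_subset.antisymm fun w hw => ?_
  refine ⟨w ᵥ* γ⁻¹, (h.nonsing_inv hinv hu).mapsTo_vecMul_pi hL hw, ?_⟩
  change w ᵥ* γ⁻¹ ᵥ* γ = w
  rw [vecMul_vecMul, nonsing_inv_mul _ hu, vecMul_one]

end Matrix

open Submodule NumberField in
theorem IsFullLattice.exists_pos_mul_mem {K : Type*} [Field K] [NumberField K] {ι : Type*}
    [Fintype ι] {L : ι → Submodule ℤ K} (hL : ∀ i, IsFullLattice K (L i)) :
    ∃ N : ℕ, 0 < N ∧ ∀ i j, ∀ x ∈ L i, ∀ c ∈ integralClosure ℤ K, (N : K) * (x * c) ∈ L j := by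
  have hO : (integralClosure ℤ K).toSubmodule.FG :=
    Module.Finite.iff_fg.mp (inferInstanceAs (Module.Finite ℤ (𝓞 K)))
  obtain ⟨N, hN0, hN⟩ :=
    ((fg_iSup L fun i => (hL i).1).mul hO).exists_pos_nsmul_mem_forall fun i => (hL i).2
  refine ⟨N, hN0, fun i j x hx c hc => ?_⟩
  simpa [nsmul_eq_mul] using hN j _ (mul_mem_mul (mem_iSup_of_mem i hx) hc)

/-- For any two full lattices `m, n ⊆ K` there exists a positive integer `N` such that
the principal congruence subgroup `Γ_{O_K}(N·O_K)` (matrices in `GL₂(O_K)` congruent to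
the identity mod `N·O_K`) is contained in
`GL(m⊕n) = {γ ∈ GL₂(K) : (m,n)·γ = (m,n)}`, where `GL₂(K)` acts on row vectors by
right matrix multiplication. -/
theorem congruence_subgroup_le_stabilizer (K : Type*) [Field K] [NumberField K]
    (m n : Submodule ℤ K) (hm : IsFullLattice K m) (hn : IsFullLattice K n) :
    ∃ N : ℕ, 0 < N ∧ ∀ γ : Matrix (Fin 2) (Fin 2) K,
      (∀ i j, γ i j ∈ integralClosure ℤ K) →
      (∃ δ ∈ integralClosure ℤ K, γ.det * δ = 1) →
      (∀ i j, ∃ c ∈ integralClosure ℤ K,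
        γ i j - (1 : Matrix (Fin 2) (Fin 2) K) i j = (N : K) * c) →
      (fun v : Fin 2 → K => Matrix.vecMul v γ) ''
          {v : Fin 2 → K | v 0 ∈ m ∧ v 1 ∈ n}
        = {v : Fin 2 → K | v 0 ∈ m ∧ v 1 ∈ n} := by
  obtain ⟨N, hN0, hN⟩ :=
    IsFullLattice.exists_pos_mul_mem (L := ![m, n]) (Fin.forall_fin_two.2 ⟨hm, hn⟩)
  refine ⟨N, hN0, fun γ hint hdet hcong => ?_⟩
  have hpi : {v : Fin 2 → K | v 0 ∈ m ∧ v 1 ∈ n} = Set.univ.pi fun i => (![m, n] i : Set K) := by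
    ext v
    simp [Fin.forall_fin_two]
  rw [hpi]
  exact Matrix.ModEqOne.image_vecMul_pi_eq (O := (integralClosure ℤ K).toSubring) hcong hN hint hdet
end

section
/- Let K be a number field, m, n ⊆ K full lattices, and let γ = [[a,b],[c,d]] ∈ GL₂(K) satisfy (m⊕n)·γ = m⊕n (right action on row vectors). Then: (i) det(γ) ∈ O_K^×; (ii) a·m ⊆ m, d·n ⊆ n, b·m ⊆ n, and c·n ⊆ m. -/
open Matrix

lemma Matrix.mapsTo_vecMul_inv_of_image_eq {R ι : Type*} [CommRing R] [Fintype ι]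
    [DecidableEq ι] {A : Matrix ι ι R} (hA : IsUnit A.det) {S : Set (ι → R)}
    (hS : (· ᵥ* A) '' S = S) : Set.MapsTo (· ᵥ* A⁻¹) S S := by
  intro v hv
  rw [← hS] at hv
  obtain ⟨w, hw, rfl⟩ := hv
  simpa [vecMul_vecMul, mul_nonsing_inv A hA] using hw

section LatticeSum

variable {K : Type*} [CommRing K] (m n : Submodule ℤ K)

/-- The subgroup `m ⊕ n` of `K²`. -/
def latticeSum : Set (Fin 2 → K) := {v | v 0 ∈ m ∧ v 1 ∈ n}

lemma entries_mul_mem_of_mapsTo_vecMul {A : Matrix (Fin 2) (Fin 2) K}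
    (hA : Set.MapsTo (· ᵥ* A) (latticeSum m n) (latticeSum m n)) :
    (∀ x ∈ m, A 0 0 * x ∈ m) ∧ (∀ y ∈ n, A 1 1 * y ∈ n) ∧
      (∀ x ∈ m, A 0 1 * x ∈ n) ∧ (∀ y ∈ n, A 1 0 * y ∈ m) := by
  have row (x y : K) (hx : x ∈ m) (hy : y ∈ n) :
      x * A 0 0 + y * A 1 0 ∈ m ∧ x * A 0 1 + y * A 1 1 ∈ n := by
    simpa [latticeSum, vecMul, dotProduct, Fin.sum_univ_two] using
      hA (x := ![x, y]) ⟨hx, hy⟩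
  refine ⟨fun x hx => ?_, fun y hy => ?_, fun x hx => ?_, fun y hy => ?_⟩
  · simpa [mul_comm] using (row x 0 hx n.zero_mem).1
  · simpa [mul_comm] using (row 0 y m.zero_mem hy).2
  · simpa [mul_comm] using (row x 0 hx n.zero_mem).2
  · simpa [mul_comm] using (row 0 y m.zero_mem hy).1

end LatticeSum

section NumberField

variable {K : Type*} [Field K] [NumberField K]

lemma IsFullLattice.ne_bot {L : Submodule ℤ K} (hL : IsFullLattice K L) : L ≠ ⊥ := by
  rintro rfl
  simpa using hL.2

lemma IsFullLattice.isIntegral_of_mul_mem {L : Submodule ℤ K} (hL : IsFullLattice K L) {x : K}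
    (hx : ∀ y ∈ L, x * y ∈ L) : IsIntegral ℤ x :=
  isIntegral_of_smul_mem_submodule L hL.ne_bot hL.1 x hx

lemma isIntegral_det_of_entries_mul_mem {m n : Submodule ℤ K} (hm : IsFullLattice K m)
    (hn : IsFullLattice K n) {A : Matrix (Fin 2) (Fin 2) K}
    (ha : ∀ x ∈ m, A 0 0 * x ∈ m) (hd : ∀ y ∈ n, A 1 1 * y ∈ n)
    (hb : ∀ x ∈ m, A 0 1 * x ∈ n) (hc : ∀ y ∈ n, A 1 0 * y ∈ m) :
    IsIntegral ℤ A.det := by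
  have hbc : IsIntegral ℤ (A 0 1 * A 1 0) :=
    hm.isIntegral_of_mul_mem fun x hx => by
      simpa [mul_comm, mul_left_comm] using hc _ (hb x hx)
  rw [det_fin_two]
  exact ((hm.isIntegral_of_mul_mem ha).mul (hn.isIntegral_of_mul_mem hd)).sub hbc

end NumberField

/-- If `γ = [[a,b],[c,d]] ∈ GL₂(K)` stabilizes `m⊕n` under the right action on row
vectors, then (i) `det γ = ad−bc` is a unit of `O_K`, and (ii) `a·m ⊆ m`, `d·n ⊆ n`,
`b·m ⊆ n` and `c·n ⊆ m`. -/
theorem stabilizer_entries (K : Type*) [Field K] [NumberField K]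
    (m n : Submodule ℤ K) (hm : IsFullLattice K m) (hn : IsFullLattice K n)
    (a b c d : K) (hdet : a * d - b * c ≠ 0)
    (hstab : (fun v : Fin 2 → K => Matrix.vecMul v !![a, b; c, d]) ''
        {v : Fin 2 → K | v 0 ∈ m ∧ v 1 ∈ n}
      = {v : Fin 2 → K | v 0 ∈ m ∧ v 1 ∈ n}) :
    (a * d - b * c ∈ integralClosure ℤ K ∧
      ∃ u ∈ integralClosure ℤ K, (a * d - b * c) * u = 1) ∧
    (∀ x ∈ m, a * x ∈ m) ∧ (∀ y ∈ n, d * y ∈ n) ∧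
    (∀ x ∈ m, b * x ∈ n) ∧ (∀ y ∈ n, c * y ∈ m) := by
  set A : Matrix (Fin 2) (Fin 2) K := !![a, b; c, d]
  have hdetA : A.det = a * d - b * c := det_fin_two_of a b c d
  have hS : (· ᵥ* A) '' latticeSum m n = latticeSum m n := hstab
  obtain ⟨ha, hd, hb, hc⟩ :=
    entries_mul_mem_of_mapsTo_vecMul m n (hS ▸ Set.mapsTo_image _ _)
  obtain ⟨ha', hd', hb', hc'⟩ := entries_mul_mem_of_mapsTo_vecMul m n
    (mapsTo_vecMul_inv_of_image_eq (hdetA ▸ hdet.isUnit) hS)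
  have hint : IsIntegral ℤ A.det := isIntegral_det_of_entries_mul_mem hm hn ha hd hb hc
  have hint' : IsIntegral ℤ A⁻¹.det := isIntegral_det_of_entries_mul_mem hm hn ha' hd' hb' hc'
  rw [det_nonsing_inv, Ring.inverse_eq_inv] at hint'
  rw [hdetA] at hint hint'
  exact ⟨⟨hint, _, hint', mul_inv_cancel₀ hdet⟩, ha, hd, hb, hc⟩
end

section
/- Let K be a number field and m, n ⊆ K two full lattices. Let Υ(m,n) be the subgroup of SL₂(K) generated by the matrices S = [[0,−1],[1,0]], the diagonal matrices diag(λ, λ⁻¹) for λ ∈ K^×, and the unipotent matrices [[1,μ],[0,1]] with μ·m ⊆ n. Then Υ(m,n) acts transitively on the projective line ℙ¹(K) by Möbius transformations. -/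
/-- The generators of the group `Υ(m,n) ≤ SL₂(K)`: the matrix `S = [[0,−1],[1,0]]`,
the diagonal matrices `diag(λ, λ⁻¹)` for `λ ∈ K^×`, and the unipotent matrices
`[[1,μ],[0,1]]` with `μ·m ⊆ n`. -/
def upsilonGen (K : Type*) [Field K] (m n : Submodule ℤ K) :
    Set (Matrix.SpecialLinearGroup (Fin 2) K) :=
  {g | g.1 = !![0, -1; 1, 0] ∨
    (∃ l : K, l ≠ 0 ∧ g.1 = !![l, 0; 0, l⁻¹]) ∨
    (∃ μ : K, (∀ x ∈ m, μ * x ∈ n) ∧ g.1 = !![1, μ; 0, 1])}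

/-!
Clearing denominators gives a nonzero integer `N` with `N • m ⊆ n`, so `Υ(m,n)` contains the
unipotents `T(±N)`. Conjugation by `diag(a, a⁻¹)` multiplies the parameter of `T` by `a²`, and
every `t` is of the form `a² N - b² N`, so `Υ(m,n)` contains every unipotent `T(t)`.
Together with `S` these move any nonzero vector onto the line `K e₁`, which gives transitivity
on `ℙ¹(K)`.
-/

section RationalSpan

variable {M : Type*} [AddCommGroup M] [Module ℚ M]

theorem Submodule.exists_int_smul_mem_of_mem_span_rat {n : Submodule ℤ M} {x : M}
    (hx : x ∈ Submodule.span ℚ (n : Set M)) : ∃ k : ℤ, k ≠ 0 ∧ k • x ∈ n := by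
  obtain ⟨y, hy, k, rfl⟩ := (IsLocalization.mem_span_iff (nonZeroDivisors ℤ)).1 hx
  refine ⟨k, nonZeroDivisors.coe_ne_zero k, ?_⟩
  have hk : IsLocalization.mk' ℚ 1 k * (k : ℚ) = 1 := by simp
  rw [Submodule.span_eq] at hy
  rwa [← Int.cast_smul_eq_zsmul ℚ, smul_smul, mul_comm, hk, one_smul]

theorem Submodule.FG.exists_int_smul_le {m n : Submodule ℤ M} (hm : m.FG)
    (hmn : (m : Set M) ⊆ Submodule.span ℚ (n : Set M)) :
    ∃ N : ℤ, N ≠ 0 ∧ ∀ x ∈ m, N • x ∈ n := by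
  obtain ⟨s, rfl⟩ := hm
  choose k hk hkx using fun x : s =>
    Submodule.exists_int_smul_mem_of_mem_span_rat (hmn (Submodule.subset_span x.2))
  refine ⟨∏ x ∈ s.attach, k x, Finset.prod_ne_zero_iff.2 fun x _ => hk x, ?_⟩
  suffices Submodule.span ℤ s ≤ n.comap ((∏ x ∈ s.attach, k x) • LinearMap.id) from
    fun x hx => this hx
  refine Submodule.span_le.2 fun x hx => ?_
  obtain ⟨c, hc⟩ := Finset.dvd_prod_of_mem k (Finset.mem_attach s ⟨x, hx⟩)
  rw [SetLike.mem_coe, Submodule.mem_comap, LinearMap.smul_apply, LinearMap.id_apply, hc,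
    mul_comm, mul_smul]
  exact n.smul_mem c (hkx ⟨x, hx⟩)

end RationalSpan

open Matrix
open scoped MatrixGroups

namespace Matrix.SpecialLinearGroup

variable {ι K : Type*} [Fintype ι] [DecidableEq ι] [Field K]

theorem inv_mulVec_mulVec (g : SpecialLinearGroup ι K) (v : ι → K) :
    (g⁻¹ : SpecialLinearGroup ι K).1 *ᵥ (g.1 *ᵥ v) = v := by
  rw [mulVec_mulVec, ← coe_mul, inv_mul_cancel, coe_one, one_mulVec]

theorem exists_mulVec_eq_smul_of_forall {G : Subgroup (SpecialLinearGroup ι K)} (e : ι → K)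
    (hG : ∀ v ≠ 0, ∃ g ∈ G, ∃ c : K, c ≠ 0 ∧ g.1 *ᵥ v = c • e)
    {v w : ι → K} (hv : v ≠ 0) (hw : w ≠ 0) :
    ∃ g ∈ G, ∃ c : K, c ≠ 0 ∧ g.1 *ᵥ v = c • w := by
  obtain ⟨g, hg, c, hc, hgv⟩ := hG v hv
  obtain ⟨h, hh, d, hd, hhw⟩ := hG w hw
  have hhe : (h⁻¹).1 *ᵥ e = d⁻¹ • w := by
    rw [eq_inv_smul_iff₀ hd, ← mulVec_smul, ← hhw, inv_mulVec_mulVec]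
  refine ⟨h⁻¹ * g, mul_mem (inv_mem hh) hg, d⁻¹ * c, mul_ne_zero (inv_ne_zero hd) hc, ?_⟩
  rw [coe_mul, ← mulVec_mulVec, hgv, mulVec_smul, hhe, smul_smul, mul_comm]

end Matrix.SpecialLinearGroup

namespace SL2

variable {K : Type*} [Field K]

def S : SL(2, K) :=
  ⟨!![0, -1; 1, 0], by simp [det_fin_two_of]⟩

def diag (u : Kˣ) : SL(2, K) :=
  ⟨!![(u : K), 0; 0, (u : K)⁻¹], by simp [det_fin_two_of]⟩

def T (t : K) : SL(2, K) :=
  ⟨!![1, t; 0, 1], by simp [det_fin_two_of]⟩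

@[simp]
theorem T_zero : T (0 : K) = 1 := by
  ext i j; fin_cases i <;> fin_cases j <;> rfl

theorem T_add (s t : K) : T (s + t) = T s * T t := by
  apply Subtype.ext
  show !![1, s + t; 0, 1] = !![1, s; 0, 1] * !![1, t; 0, 1]
  simp [add_comm]

theorem diag_mul_T_mul_diag_inv (u : Kˣ) (t : K) :
    diag u * T t * diag u⁻¹ = T (u ^ 2 * t) := by
  apply Subtype.ext
  show !![(u : K), 0; 0, (u : K)⁻¹] * !![1, t; 0, 1] *
      !![((u⁻¹ : Kˣ) : K), 0; 0, ((u⁻¹ : Kˣ) : K)⁻¹] = !![1, (u : K) ^ 2 * t; 0, 1]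
  simp
  ring

theorem exists_mulVec_eq_smul_e₁ {G : Subgroup SL(2, K)} (hS : S ∈ G) (hT : ∀ t, T t ∈ G)
    {v : Fin 2 → K} (hv : v ≠ 0) :
    ∃ g ∈ G, ∃ c : K, c ≠ 0 ∧ g.1 *ᵥ v = c • ![1, 0] := by
  by_cases h1 : v 1 = 0
  · have h0 : v 0 ≠ 0 := fun h0 => hv (by ext i; fin_cases i <;> simp [h0, h1])
    refine ⟨1, one_mem G, v 0, h0, ?_⟩
    ext i; fin_cases i <;> simp [h1]
  · refine ⟨S * T (-v 0 / v 1), mul_mem hS (hT _), -v 1, neg_ne_zero.2 h1, ?_⟩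
    rw [Matrix.SpecialLinearGroup.coe_mul, ← mulVec_mulVec]
    ext i; fin_cases i <;> simp [S, T, mulVec, dotProduct, Fin.sum_univ_two, div_mul_cancel₀ _ h1]

end SL2

section Upsilon

variable {K : Type*} [Field K] (m n : Submodule ℤ K)

theorem S_mem_closure_upsilonGen : SL2.S ∈ Subgroup.closure (upsilonGen K m n) :=
  Subgroup.subset_closure (Or.inl rfl)

theorem diag_mem_closure_upsilonGen (u : Kˣ) :
    SL2.diag u ∈ Subgroup.closure (upsilonGen K m n) :=
  Subgroup.subset_closure (Or.inr (Or.inl ⟨u, u.ne_zero, rfl⟩))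

variable {m n}

theorem T_mem_closure_upsilonGen {μ : K} (hμ : ∀ x ∈ m, μ * x ∈ n) :
    SL2.T μ ∈ Subgroup.closure (upsilonGen K m n) :=
  Subgroup.subset_closure (Or.inr (Or.inr ⟨μ, hμ, rfl⟩))

theorem T_sq_mul_mem_closure_upsilonGen {μ : K} (hμ : ∀ x ∈ m, μ * x ∈ n) (a : K) :
    SL2.T (a ^ 2 * μ) ∈ Subgroup.closure (upsilonGen K m n) := by
  obtain rfl | ha := eq_or_ne a 0
  · simp
  · rw [← Units.val_mk0 ha, ← SL2.diag_mul_T_mul_diag_inv]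
    exact mul_mem (mul_mem (diag_mem_closure_upsilonGen m n _) (T_mem_closure_upsilonGen hμ))
      (diag_mem_closure_upsilonGen m n _)

theorem T_mem_closure_upsilonGen_of_ne_zero [NeZero (2 : K)] {μ : K} (hμ0 : μ ≠ 0)
    (hμ : ∀ x ∈ m, μ * x ∈ n) (t : K) :
    SL2.T t ∈ Subgroup.closure (upsilonGen K m n) := by
  have hμ' : ∀ x ∈ m, -μ * x ∈ n := fun x hx => by simpa using n.neg_mem (hμ x hx)
  -- polarization: `t = a² μ + b² (-μ)` with `a, b = (t / μ ± 1) / 2`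
  have ht : t = ((t / μ + 1) / 2) ^ 2 * μ + ((t / μ - 1) / 2) ^ 2 * -μ := by
    field_simp
    ring
  rw [ht, SL2.T_add]
  exact mul_mem (T_sq_mul_mem_closure_upsilonGen hμ _) (T_sq_mul_mem_closure_upsilonGen hμ' _)

end Upsilon

/-- The subgroup `Υ(m,n)` of `SL₂(K)` generated by `upsilonGen` acts transitively on
`ℙ¹(K)` by Möbius transformations: for any two nonzero vectors `v, w ∈ K²` there is
`g ∈ Υ(m,n)` sending the line through `v` to the line through `w`. -/
theorem upsilon_transitive (K : Type*) [Field K] [NumberField K]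
    (m n : Submodule ℤ K) (hm : IsFullLattice K m) (hn : IsFullLattice K n) :
    ∀ v w : Fin 2 → K, v ≠ 0 → w ≠ 0 →
      ∃ g ∈ Subgroup.closure (upsilonGen K m n),
        ∃ c : K, c ≠ 0 ∧ Matrix.mulVec g.1 v = c • w := by
  obtain ⟨N, hN, hNmn⟩ := hm.1.exists_int_smul_le fun x _ => by rw [hn.2]; trivial
  have hT (t : K) : SL2.T t ∈ Subgroup.closure (upsilonGen K m n) :=
    T_mem_closure_upsilonGen_of_ne_zero (Int.cast_ne_zero.2 hN)
      (fun x hx => by simpa [zsmul_eq_mul] using hNmn x hx) t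
  intro v w hv hw
  exact SpecialLinearGroup.exists_mulVec_eq_smul_of_forall ![1, 0]
    (fun u hu => SL2.exists_mulVec_eq_smul_e₁ (S_mem_closure_upsilonGen m n) hT hu) hv hw
end
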